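/- Let Y be a discrete random variable and T a finite set of discrete random variables with Y ∉ T, let Θ be the set of all Markov boundaries of Y within T, and suppose X ∈ (⋃_{M ∈ Θ} M) \ (⋂_{M ∈ Θ} M). Let L = T \ {X} and let P be the joint distribution of (X, Y, L). Then there exist two sequences of joint distributions {P_i} and {P'_i} on (X, Y, L) (on the same finite value sets), both converging to P in total variation distance, such that the part mutual information PMI[P_i](X, Y | L) and PMI[P'_i](X, Y | L) are well-defined for every i, both sequences of values converge, and lim_{i→∞} PMI[P_i](X, Y | L) ≠ lim_{i→∞} PMI[P'_i](X, Y | L). -/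

import Mathlib

open scoped BigOperators

noncomputable section

/-- `p` is a probability mass function on the finite type `Ω`. -/
def IsDist {Ω : Type*} [Fintype Ω] (p : Ω → ℝ) : Prop :=
  (∀ w, 0 ≤ p w) ∧ ∑ w, p w = 1

/-- Total variation distance between two distributions on the same finite type. -/
def tvDist {Ω : Type*} [Fintype Ω] (p q : Ω → ℝ) : ℝ :=
  (∑ w, |p w - q w|) / 2

variable {ι : Type*} [Fintype ι] [DecidableEq ι]
variable {α : ι → Type*} [∀ i, Fintype (α i)] [∀ i, DecidableEq (α i)]

/-- Marginal probability, under joint pmf `p`, of the event that the variables in the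
collection `A` take the values prescribed by the configuration `x`. -/
def margProb (p : (∀ i, α i) → ℝ) (A : Finset ι) (x : ∀ i, α i) : ℝ :=
  ∑ w : ∀ i, α i, if ∀ i ∈ A, w i = x i then p w else 0

/-- Conditional independence of the collections `A` and `B` given the collection `C`:
`f(a, b | c) = f(a | c) f(b | c)` whenever `f(c) > 0` (stated in multiplied-out form). -/
def CondIndep (p : (∀ i, α i) → ℝ) (A B C : Finset ι) : Prop :=
  ∀ x : ∀ i, α i, 0 < margProb p C x →
    margProb p (A ∪ B ∪ C) x * margProb p C x =
      margProb p (A ∪ C) x * margProb p (B ∪ C) x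

/-- `M` is a Markov blanket of the variable `y` within the collection `T`. -/
def MarkovBlanket (p : (∀ i, α i) → ℝ) (y : ι) (T M : Finset ι) : Prop :=
  M ⊆ T ∧ CondIndep p {y} (T \ M) M

/-- `M` is a Markov boundary of `y` within `T`: a Markov blanket no proper subset of
which is a Markov blanket. -/
def MarkovBoundary (p : (∀ i, α i) → ℝ) (y : ι) (T M : Finset ι) : Prop :=
  MarkovBlanket p y T M ∧ ∀ M' ⊂ M, ¬ MarkovBlanket p y T M'

/-- Mutual information between the collections `A` and `B`
(with the convention `0 · log(junk) = 0` on zero-probability terms). -/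
def MI (p : (∀ i, α i) → ℝ) (A B : Finset ι) : ℝ :=
  ∑ w : ∀ i, α i, p w *
    Real.log (margProb p (A ∪ B) w / (margProb p A w * margProb p B w))

/-- Conditional mutual information between collections `A` and `B` given `C`
(with the convention `0 · log(junk) = 0` on zero-probability terms). -/
def CMI (p : (∀ i, α i) → ℝ) (A B C : Finset ι) : ℝ :=
  ∑ w : (∀ i, α i), p w *
    Real.log ((margProb p (A ∪ B ∪ C) w * margProb p C w) /
      (margProb p (A ∪ C) w * margProb p (B ∪ C) w))


/-- Conditional probability `f(y | x, l)`, read off at configuration `w`. -/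
def csCond (p : (∀ i, α i) → ℝ) (y X : ι) (L : Finset ι) (w : ∀ i, α i) : ℝ :=
  margProb p (insert y (insert X L)) w / margProb p (insert X L) w

/-- Causal strength of the variable `X` on the variable `y`, with conditioning
collection `L`: `CS(X→Y) = Σ f(x,y,l) log( f(y|x,l) / Σ_{x'} f(y|x',l) f(x') )`. -/
def CSI (p : (∀ i, α i) → ℝ) (y X : ι) (L : Finset ι) : ℝ :=
  ∑ w : ∀ i, α i, p w *
    Real.log (csCond p y X L w /
      ∑ v : α X, csCond p y X L (Function.update w X v) *
        margProb p {X} (Function.update w X v))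

/-- Every conditional probability appearing with nonzero weight in `CSI` is defined. -/
def CSIDefined (p : (∀ i, α i) → ℝ) (X : ι) (L : Finset ι) : Prop :=
  ∀ w : ∀ i, α i, 0 < margProb p {X} w → 0 < margProb p L w →
    0 < margProb p (insert X L) w

/-- `f*(x | l) = Σ_y f(x | y, l) f(y)`, read off at configuration `w`. -/
def pmiFstarX (p : (∀ i, α i) → ℝ) (y X : ι) (L : Finset ι) (w : ∀ i, α i) : ℝ :=
  ∑ u : α y, (margProb p (insert y (insert X L)) (Function.update w y u) /
      margProb p (insert y L) (Function.update w y u)) *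
    margProb p {y} (Function.update w y u)

/-- `f*(y | l) = Σ_x f(y | x, l) f(x)`, read off at configuration `w`. -/
def pmiFstarY (p : (∀ i, α i) → ℝ) (y X : ι) (L : Finset ι) (w : ∀ i, α i) : ℝ :=
  ∑ v : α X, (margProb p (insert y (insert X L)) (Function.update w X v) /
      margProb p (insert X L) (Function.update w X v)) *
    margProb p {X} (Function.update w X v)

/-- Part mutual information between `X` and `y` given the collection `L`:
`PMI(X,Y|L) = Σ f(x,y,l) log( f(x,y|l) / ( f*(x|l) f*(y|l) ) )`. -/
def PMII (p : (∀ i, α i) → ℝ) (y X : ι) (L : Finset ι) : ℝ :=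
  ∑ w : ∀ i, α i, p w *
    Real.log ((margProb p (insert y (insert X L)) w / margProb p L w) /
      (pmiFstarX p y X L w * pmiFstarY p y X L w))

/-- Every conditional probability appearing with nonzero weight in `PMII` is defined. -/
def PMIIDefined (p : (∀ i, α i) → ℝ) (y X : ι) (L : Finset ι) : Prop :=
  ∀ w : ∀ i, α i, 0 < margProb p L w →
    (0 < margProb p {X} w → 0 < margProb p (insert X L) w) ∧
    (0 < margProb p {y} w → 0 < margProb p (insert y L) w)


/-!
Write `L = T \ {X}`. A Markov boundary avoiding `X` makes `L` a blanket (weak union), so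
`Y ⊥ X | L`. If every value of `X` of positive probability occurred with every observed value
of `L`, the intersection property would let `X` be dropped from the boundary containing it;
hence some conditional `f(y | x, l)` with `f(x) > 0` and `f(l) > 0` is undefined.

Mixing `P` with weight `t` of a positive product distribution `q` makes every part mutual
information well defined, and as `t → 0⁺` the limit fills each undefined `f(y | x, l)` with the
`y`-marginal `μ` of `q` (summands off the support of `P` vanish because `t log t → 0`). The limit
depends on `μ` through `Σ f log f*(y | l)`, which is strictly concave in `μ` along the direction
changing the undefined conditional; so two choices of `μ` give two limits.
-/

open Finset Filter Topology

section MargProb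

variable {p : (∀ i, α i) → ℝ} {S S' : Finset ι} {x : ∀ i, α i}

lemma margProb_nonneg (hp : ∀ w, 0 ≤ p w) (S : Finset ι) (x : ∀ i, α i) :
    0 ≤ margProb p S x :=
  sum_nonneg fun w _ => by split_ifs <;> simp [hp w]

lemma margProb_anti (hp : ∀ w, 0 ≤ p w) (h : S ⊆ S') (x : ∀ i, α i) :
    margProb p S' x ≤ margProb p S x :=
  sum_le_sum fun w _ => by
    by_cases hc : ∀ i ∈ S', w i = x i
    · rw [if_pos hc, if_pos fun i hi => hc i (h hi)]
    · rw [if_neg hc]; split_ifs <;> simp [hp w]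

lemma margProb_eq_zero_of_subset (hp : ∀ w, 0 ≤ p w) (h : S ⊆ S')
    (h0 : margProb p S x = 0) : margProb p S' x = 0 :=
  le_antisymm (h0 ▸ margProb_anti hp h x) (margProb_nonneg hp S' x)

lemma le_margProb (hp : ∀ w, 0 ≤ p w) (S : Finset ι) (x : ∀ i, α i) :
    p x ≤ margProb p S x := by
  have := single_le_sum (f := fun w => if ∀ i ∈ S, w i = x i then p w else 0)
    (fun w _ => by split_ifs <;> simp [hp w]) (mem_univ x)
  unfold margProb
  simpa using this

lemma margProb_empty (p : (∀ i, α i) → ℝ) (x : ∀ i, α i) : margProb p ∅ x = ∑ w, p w := by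
  simp [margProb]

lemma margProb_le_one (hp : IsDist p) (S : Finset ι) (x : ∀ i, α i) : margProb p S x ≤ 1 :=
  (margProb_anti hp.1 (empty_subset S) x).trans (margProb_empty p x ▸ hp.2).le

lemma margProb_congr {x' : ∀ i, α i} (h : ∀ i ∈ S, x i = x' i) :
    margProb p S x = margProb p S x' := by
  unfold margProb
  exact sum_congr rfl fun w _ => if_congr (forall₂_congr fun i hi => by rw [h i hi]) rfl rfl

lemma margProb_update_of_notMem {j : ι} (hj : j ∉ S) (x : ∀ i, α i) (v : α j) :
    margProb p S (Function.update x j v) = margProb p S x :=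
  margProb_congr fun _ hi => Function.update_of_ne (ne_of_mem_of_not_mem hi hj) v x

lemma sum_margProb_update {j : ι} (hj : j ∉ S) (x : ∀ i, α i) :
    ∑ v : α j, margProb p (insert j S) (Function.update x j v) = margProb p S x := by
  unfold margProb
  rw [sum_comm]
  refine sum_congr rfl fun w _ => ?_
  have key : ∀ v : α j, (∀ i ∈ insert j S, w i = Function.update x j v i) ↔
      (w j = v ∧ ∀ i ∈ S, w i = x i) := fun v => by
    rw [forall_mem_insert, Function.update_self]
    refine and_congr Iff.rfl (forall₂_congr fun _ hi => ?_)
    rw [Function.update_of_ne (ne_of_mem_of_not_mem hi hj)]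
  simp only [key, ite_and]
  split_ifs <;> simp

lemma exists_pos_of_margProb_pos (hp : ∀ w, 0 ≤ p w) (h : 0 < margProb p S x) :
    ∃ w, (∀ i ∈ S, w i = x i) ∧ 0 < p w := by
  obtain ⟨w, -, hw⟩ := exists_ne_zero_of_sum_ne_zero h.ne'
  by_cases hc : ∀ i ∈ S, w i = x i
  · rw [if_pos hc] at hw
    exact ⟨w, hc, (hp w).lt_of_ne' hw⟩
  · simp [hc] at hw

end MargProb

lemma mul_eq_mul_trans {a₁ b₁ a₂ b₂ a₃ b₃ : ℝ} (h₁₂ : a₁ * b₂ = a₂ * b₁)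
    (h₂₃ : a₂ * b₃ = a₃ * b₂) (hb₂ : b₂ ≠ 0) : a₁ * b₃ = a₃ * b₁ :=
  mul_right_cancel₀ hb₂ (by linear_combination b₃ * h₁₂ + b₁ * h₂₃)

section Markov

variable {p : (∀ i, α i) → ℝ} {y X : ι} {T M : Finset ι}

/-- At configurations with `f(M) = 0` both sides vanish, so the proviso `f(M) > 0` of
`CondIndep` can be dropped. -/
lemma markovBlanket_iff (hp : ∀ w, 0 ≤ p w) :
    MarkovBlanket p y T M ↔ M ⊆ T ∧ ∀ w, margProb p (insert y T) w * margProb p M w =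
      margProb p (insert y M) w * margProb p T w := by
  refine and_congr_right fun hMT => ?_
  have hunion : {y} ∪ (T \ M) ∪ M = insert y T := by
    rw [union_assoc, sdiff_union_of_subset hMT, insert_eq]
  simp only [CondIndep, hunion, sdiff_union_of_subset hMT]
  simp only [← insert_eq]
  refine ⟨fun h w => ?_, fun h w _ => h w⟩
  rcases (margProb_nonneg hp M w).lt_or_eq with hM | hM
  · exact h w hM
  · rw [← hM, margProb_eq_zero_of_subset hp (subset_insert y M) hM.symm]
    ring

/-- Weak union. -/
lemma MarkovBlanket.erase (hp : ∀ w, 0 ≤ p w) (hM : MarkovBlanket p y T M) (hXT : X ∈ T)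
    (hXy : X ≠ y) (hXM : X ∉ M) : MarkovBlanket p y T (T.erase X) := by
  rw [markovBlanket_iff hp] at hM ⊢
  obtain ⟨L, hXL, rfl⟩ : ∃ L, X ∉ L ∧ T = insert X L :=
    ⟨T.erase X, notMem_erase X T, (insert_erase hXT).symm⟩
  rw [erase_insert hXL]
  have hML : M ⊆ L := fun i hi =>
    (mem_insert.1 (hM.1 hi)).resolve_left (ne_of_mem_of_not_mem hi hXM)
  have hXyM : X ∉ insert y M := by simp [hXy, hXM]
  have hXyL : X ∉ insert y L := by simp [hXy, hXL]
  refine ⟨subset_insert X L, fun w => ?_⟩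
  have hsum : margProb p (insert y L) w * margProb p M w =
      margProb p (insert y M) w * margProb p L w := by
    rw [← sum_margProb_update hXyL, ← sum_margProb_update hXL, sum_mul, mul_sum]
    refine sum_congr rfl fun v _ => ?_
    have := hM.2 (Function.update w X v)
    rwa [margProb_update_of_notMem hXM, margProb_update_of_notMem hXyM, insert_comm] at this
  rcases (margProb_nonneg hp M w).lt_or_eq with hMw | hMw
  · exact mul_eq_mul_trans (hM.2 w) hsum.symm hMw.ne'
  · have hLw := margProb_eq_zero_of_subset hp hML hMw.symm
    rw [hLw, margProb_eq_zero_of_subset hp (subset_insert y L) hLw]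
    ring

/-- The intersection property, under the positivity hypothesis `hpos`. -/
lemma MarkovBlanket.erase_of_positivity (hp : ∀ w, 0 ≤ p w) (hM : MarkovBlanket p y T M)
    (hXM : X ∈ M) (hXy : X ≠ y) (hL : MarkovBlanket p y T (T.erase X))
    (hpos : ∀ w (v : α X), 0 < margProb p (T.erase X) w →
      0 < margProb p {X} (Function.update w X v) → 0 < margProb p T (Function.update w X v)) :
    MarkovBlanket p y T (M.erase X) := by
  rw [markovBlanket_iff hp] at hM hL ⊢
  refine ⟨(erase_subset X M).trans hM.1, fun w => ?_⟩
  set L := T.erase X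
  have hXL : X ∉ L := notMem_erase X T
  have hXyL : X ∉ insert y L := by simp [hXy, hXL]
  obtain ⟨M₀, hXM₀, rfl⟩ : ∃ M₀, X ∉ M₀ ∧ M = insert X M₀ :=
    ⟨M.erase X, notMem_erase X M, (insert_erase hXM).symm⟩
  rw [erase_insert hXM₀]
  rcases (margProb_nonneg hp L w).lt_or_eq with hLw | hLw
  swap
  · have hTw := margProb_eq_zero_of_subset hp hL.1 hLw.symm
    rw [hTw, margProb_eq_zero_of_subset hp (subset_insert y T) hTw]
    ring
  have hv : ∀ v, margProb p (insert y (insert X M₀)) (Function.update w X v) *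
      margProb p L w = margProb p (insert y L) w *
        margProb p (insert X M₀) (Function.update w X v) := fun v => by
    rcases (margProb_nonneg hp _ (Function.update w X v)).lt_or_eq with hMv | hMv
    · have hTv := hpos w v hLw
        (hMv.trans_le (margProb_anti hp (singleton_subset_iff.2 (mem_insert_self X M₀)) _))
      have h₂ := hL.2 (Function.update w X v)
      rw [margProb_update_of_notMem hXL, margProb_update_of_notMem hXyL] at h₂
      exact mul_eq_mul_trans (hM.2 _).symm h₂ hTv.ne'
    · rw [← hMv, margProb_eq_zero_of_subset hp (subset_insert y _) hMv.symm]
      ring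
  have hsum : margProb p (insert y L) w * margProb p M₀ w =
      margProb p (insert y M₀) w * margProb p L w := by
    have hXyM₀ : X ∉ insert y M₀ := by simp [hXy, hXM₀]
    rw [← sum_margProb_update hXyM₀, ← sum_margProb_update hXM₀, sum_mul, mul_sum]
    exact sum_congr rfl fun v _ => by rw [insert_comm]; exact (hv v).symm
  exact mul_eq_mul_trans (hL.2 w) hsum hLw.ne'

lemma nontrivial_of_markovBoundary (hp : ∀ w, 0 ≤ p w) (hM : MarkovBoundary p y T M)
    (hXM : X ∈ M) : Nontrivial (α y) := by
  by_contra h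
  have hsub : Subsingleton (α y) := not_nontrivial_iff_subsingleton.1 h
  have hy : ∀ S : Finset ι, margProb p (insert y S) = margProb p S := fun S => by
    ext x
    exact sum_congr rfl fun w _ => if_congr
      ⟨fun h i hi => h i (mem_insert_of_mem hi), fun h => forall_mem_insert _ _ _ |>.2
        ⟨Subsingleton.elim _ _, h⟩⟩ rfl rfl
  refine hM.2 ∅ (empty_ssubset.2 ⟨X, hXM⟩) ((markovBlanket_iff hp).2
    ⟨empty_subset T, fun w => ?_⟩)
  rw [hy, hy]
  ring

end Markov

lemma log_add_log_lt {a b : ℝ} (ha : 0 < a) (hb : 0 < b) (hab : a ≠ b) :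
    Real.log a + Real.log b < 2 * Real.log ((a + b) / 2) := by
  rw [← Real.log_mul ha.ne' hb.ne', show (2 : ℝ) = (2 : ℕ) by norm_num, ← Real.log_pow]
  refine Real.log_lt_log (mul_pos ha hb) ?_
  nlinarith [sq_pos_of_ne_zero (sub_ne_zero.2 hab)]

lemma log_add_log_le {a b : ℝ} (ha : 0 < a) (hb : 0 < b) :
    Real.log a + Real.log b ≤ 2 * Real.log ((a + b) / 2) := by
  rcases eq_or_ne a b with rfl | hab
  · rw [add_self_div_two]; ring_nf; rfl
  · exact (log_add_log_lt ha hb hab).le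

section Fill

variable {p : (∀ i, α i) → ℝ} {y X : ι} {L : Finset ι}

/-- The part of `f*(y | l) = Σ_x f(y | x, l) f(x)` coming from the values `x` with `f(x, l) > 0`,
where `f(y | x, l)` is defined. -/
def definedFstarY (p : (∀ i, α i) → ℝ) (y X : ι) (L : Finset ι) (w : ∀ i, α i) : ℝ :=
  ∑ v : α X, if 0 < margProb p (insert X L) (Function.update w X v) then
    margProb p (insert y (insert X L)) (Function.update w X v) /
      margProb p (insert X L) (Function.update w X v) * margProb p {X} (Function.update w X v)
  else 0

/-- The weight `Σ f(x)` of the values `x` with `f(x, l) = 0`, at which `f(y | x, l)` is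
undefined. -/
def undefinedCondMass (p : (∀ i, α i) → ℝ) (X : ι) (L : Finset ι) (w : ∀ i, α i) : ℝ :=
  ∑ v : α X, if 0 < margProb p (insert X L) (Function.update w X v) then 0
  else margProb p {X} (Function.update w X v)

lemma undefinedCondMass_nonneg (hp : ∀ w, 0 ≤ p w) (X : ι) (L : Finset ι) (w : ∀ i, α i) :
    0 ≤ undefinedCondMass p X L w :=
  sum_nonneg fun _ _ => by split_ifs <;> simp [margProb_nonneg hp]

lemma undefinedCondMass_pos (hp : ∀ w, 0 ≤ p w) {w : ∀ i, α i} {v : α X}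
    (hXL : margProb p (insert X L) (Function.update w X v) = 0)
    (hX : 0 < margProb p {X} (Function.update w X v)) : 0 < undefinedCondMass p X L w := by
  refine hX.trans_le ?_
  have := single_le_sum (f := fun v => if 0 < margProb p (insert X L) (Function.update w X v)
    then 0 else margProb p {X} (Function.update w X v))
    (fun _ _ => by split_ifs <;> simp [margProb_nonneg hp]) (mem_univ v)
  unfold undefinedCondMass
  simpa [hXL] using this

lemma definedFstarY_pos (hp : ∀ w, 0 ≤ p w) {w : ∀ i, α i} (hw : 0 < p w) :
    0 < definedFstarY p y X L w := by
  have hpos : ∀ S, 0 < margProb p S w := fun S => hw.trans_le (le_margProb hp S w)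
  have := single_le_sum (f := fun v => if 0 < margProb p (insert X L) (Function.update w X v)
    then margProb p (insert y (insert X L)) (Function.update w X v) /
      margProb p (insert X L) (Function.update w X v) * margProb p {X} (Function.update w X v)
    else 0) (fun _ _ => by
      split_ifs
      · exact mul_nonneg (div_nonneg (margProb_nonneg hp _ _) (margProb_nonneg hp _ _))
          (margProb_nonneg hp _ _)
      · exact le_rfl) (mem_univ (w X))
  simp only [Function.update_eq_self, if_pos (hpos _)] at this
  exact (mul_pos (div_pos (hpos _) (hpos _)) (hpos _)).trans_le this

/-- Otherwise the intersection property would make `M \ {X}` a blanket. -/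
lemma exists_undefinedCondMass_pos {T M : Finset ι} (hp : ∀ w, 0 ≤ p w)
    (hM : MarkovBoundary p y T M) (hXM : X ∈ M) (hXy : X ≠ y)
    (hL : MarkovBlanket p y T (T.erase X)) :
    ∃ w, 0 < p w ∧ 0 < undefinedCondMass p X (T.erase X) w := by
  by_contra! h
  have hXT : X ∈ T := hM.1.1 hXM
  refine hM.2 _ (erase_ssubset hXM) (hM.1.erase_of_positivity hp hXM hXy hL
    fun w v hLw hXv => ?_)
  obtain ⟨w', hw'L, hw'⟩ := exists_pos_of_margProb_pos hp hLw
  have hagree : ∀ i ∈ T, Function.update w' X v i = Function.update w X v i := by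
    intro i hi
    by_cases hiX : i = X
    · subst hiX; simp
    · simp [Function.update_of_ne hiX, hw'L i (mem_erase.2 ⟨hiX, hi⟩)]
  rw [← margProb_congr hagree]
  by_contra! hT
  have hX : 0 < margProb p {X} (Function.update w' X v) := by
    rwa [margProb_congr fun i hi => hagree i (mem_singleton.1 hi ▸ hXT)]
  have hXL : margProb p (insert X (T.erase X)) (Function.update w' X v) = 0 := by
    rw [insert_erase hXT]; exact le_antisymm hT (margProb_nonneg hp _ _)
  exact (h w' hw').not_gt (undefinedCondMass_pos hp hXL hX)

/-- `Σ f(x, y, l) log f*(y | l)` when every undefined conditional `f(y | x, l)` is replaced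
by `μ(y)`. -/
def logFstarYFill (p : (∀ i, α i) → ℝ) (y X : ι) (L : Finset ι) (μ : α y → ℝ) : ℝ :=
  ∑ w, p w * Real.log (definedFstarY p y X L w + μ (w y) * undefinedCondMass p X L w)

lemma logFstarYFill_midpoint_lt (hp : ∀ w, 0 ≤ p w) {μ ν : α y → ℝ} (hμ : ∀ u, 0 ≤ μ u)
    (hν : ∀ u, 0 ≤ ν u) {w₀ : ∀ i, α i} (hw₀ : 0 < p w₀)
    (hD : 0 < undefinedCondMass p X L w₀) (hne : μ (w₀ y) ≠ ν (w₀ y)) :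
    (logFstarYFill p y X L μ + logFstarYFill p y X L ν) / 2 <
      logFstarYFill p y X L (fun u => (μ u + ν u) / 2) := by
  let A : (α y → ℝ) → (∀ i, α i) → ℝ := fun c w =>
    definedFstarY p y X L w + c (w y) * undefinedCondMass p X L w
  have hmid : ∀ w, A (fun u => (μ u + ν u) / 2) w = (A μ w + A ν w) / 2 := fun w => by
    simp only [A]; ring
  have hpos : ∀ w, 0 < p w → ∀ c : α y → ℝ, (∀ u, 0 ≤ c u) → 0 < A c w := fun w hw c hc =>
    add_pos_of_pos_of_nonneg (definedFstarY_pos hp hw)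
      (mul_nonneg (hc _) (undefinedCondMass_nonneg hp X L w))
  change (∑ w, p w * Real.log (A μ w) + ∑ w, p w * Real.log (A ν w)) / 2 <
    ∑ w, p w * Real.log (A (fun u => (μ u + ν u) / 2) w)
  rw [← sum_add_distrib, sum_div]
  refine sum_lt_sum (fun w _ => ?_) ⟨w₀, mem_univ w₀, ?_⟩
  · rcases (hp w).lt_or_eq with hw | hw
    · rw [hmid]
      nlinarith [log_add_log_le (hpos w hw μ hμ) (hpos w hw ν hν)]
    · simp [← hw]
  · have hAB : A μ w₀ ≠ A ν w₀ := fun h =>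
      hne (mul_right_cancel₀ hD.ne' (add_left_cancel h))
    rw [hmid]
    nlinarith [log_add_log_lt (hpos w₀ hw₀ μ hμ) (hpos w₀ hw₀ ν hν) hAB]

/-- `logFstarYFill` is strictly concave along the segment from the uniform distribution
towards a point mass at `w₀ y`, so it cannot be constant there. -/
lemma exists_logFstarYFill_ne [Nontrivial (α y)] (hp : ∀ w, 0 ≤ p w) {w₀ : ∀ i, α i}
    (hw₀ : 0 < p w₀) (hD : 0 < undefinedCondMass p X L w₀) :
    ∃ μ ν : α y → ℝ, ((∀ u, 0 < μ u) ∧ ∑ u, μ u = 1) ∧ ((∀ u, 0 < ν u) ∧ ∑ u, ν u = 1) ∧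
      logFstarYFill p y X L μ ≠ logFstarYFill p y X L ν := by
  set k : ℝ := (Fintype.card (α y) : ℝ)
  have hk : 1 < k := Nat.one_lt_cast.2 Fintype.one_lt_card
  let μ : α y → ℝ := fun _ => k⁻¹
  let ν : α y → ℝ := fun u => (μ u + if u = w₀ y then 1 else 0) / 2
  let m : α y → ℝ := fun u => (μ u + ν u) / 2
  have hμ : (∀ u, 0 < μ u) ∧ ∑ u, μ u = 1 := ⟨fun _ => by positivity, by simp [μ, k]⟩
  have hν : (∀ u, 0 < ν u) ∧ ∑ u, ν u = 1 := by
    refine ⟨fun u => by positivity, ?_⟩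
    simp only [ν, ← sum_div, sum_add_distrib, hμ.2, sum_ite_eq', if_pos (mem_univ _)]
    norm_num
  have hm : (∀ u, 0 < m u) ∧ ∑ u, m u = 1 :=
    ⟨fun u => by positivity, by simp only [m, ← sum_div, sum_add_distrib, hμ.2, hν.2]; norm_num⟩
  have hne : μ (w₀ y) ≠ ν (w₀ y) := by
    have hν₀ : ν (w₀ y) = (k⁻¹ + 1) / 2 := by simp [ν, μ]
    have : k⁻¹ < 1 := inv_lt_one_of_one_lt₀ hk
    rw [hν₀]
    exact fun h => by linarith
  have hlt := logFstarYFill_midpoint_lt hp (fun u => (hμ.1 u).le) (fun u => (hν.1 u).le) hw₀ hD hne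
  by_cases h : logFstarYFill p y X L μ = logFstarYFill p y X L m
  · exact ⟨ν, m, hν, hm, fun h' => by simp only [m] at h h'; linarith⟩
  · exact ⟨μ, m, hμ, hm, h⟩

end Fill

section ProdDist

def prodDist {κ : Type*} [Fintype κ] {β : κ → Type*} (g : ∀ k, β k → ℝ) : (∀ k, β k) → ℝ :=
  fun w => ∏ k, g k (w k)

lemma prodDist_pos {κ : Type*} [Fintype κ] {β : κ → Type*} {g : ∀ k, β k → ℝ}
    (hg₀ : ∀ k a, 0 < g k a) (w : ∀ k, β k) : 0 < prodDist g w :=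
  prod_pos fun k _ => hg₀ k (w k)

lemma isDist_prodDist {κ : Type*} [Fintype κ] [DecidableEq κ] {β : κ → Type*}
    [∀ k, Fintype (β k)] {g : ∀ k, β k → ℝ} (hg₀ : ∀ k a, 0 < g k a) (hg : ∀ k, ∑ a, g k a = 1) :
    IsDist (prodDist g) :=
  ⟨fun w => (prodDist_pos hg₀ w).le, by simp [prodDist, ← Fintype.prod_sum, hg]⟩

variable {g : ∀ i, α i → ℝ}

lemma margProb_prodDist (hg : ∀ i, ∑ a, g i a = 1) (S : Finset ι) (x : ∀ i, α i) :
    margProb (prodDist g) S x = ∏ i ∈ S, g i (x i) := by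
  let h : ∀ i, α i → ℝ := fun i a => if i ∈ S → a = x i then g i a else 0
  have hw : ∀ w : ∀ i, α i,
      (if ∀ i ∈ S, w i = x i then prodDist g w else 0) = ∏ i, h i (w i) := fun w => by
    simp [h, prod_ite_zero, prodDist]
  have hsum : ∀ i, ∑ a, h i a = if i ∈ S then g i (x i) else 1 := fun i => by
    by_cases hi : i ∈ S <;> simp [h, hi, hg]
  rw [margProb, sum_congr rfl fun w _ => hw w, ← Fintype.prod_sum,
    prod_congr rfl fun i _ => hsum i, prod_ite_mem, univ_inter]

end ProdDist

section Limits

variable {p q : (∀ i, α i) → ℝ}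

/-- The limit of the conditional `f_t(S') / f_t(S)` as `t → 0⁺` along `f_t = (1 - t) p + t q`:
where `p` leaves it undefined, the conditional of `q` takes over. -/
def condLim (p q : (∀ i, α i) → ℝ) (S' S : Finset ι) (x : ∀ i, α i) : ℝ :=
  if 0 < margProb p S x then margProb p S' x / margProb p S x
  else margProb q S' x / margProb q S x

/-- The limit of `Σ_v f_t(S' | S) f_t(j = v)`, the shape of both `f*` terms of `PMII`. -/
def fstarLim (p q : (∀ i, α i) → ℝ) (j : ι) (S' S : Finset ι) (w : ∀ i, α i) : ℝ :=
  ∑ v : α j, condLim p q S' S (Function.update w j v) * margProb p {j} (Function.update w j v)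

def pmiLim (p q : (∀ i, α i) → ℝ) (y X : ι) (L : Finset ι) : ℝ :=
  ∑ w, p w * Real.log (condLim p q (insert y (insert X L)) L w /
    (fstarLim p q y (insert y (insert X L)) (insert y L) w *
      fstarLim p q X (insert y (insert X L)) (insert X L) w))

lemma condLim_of_pos (q : (∀ i, α i) → ℝ) {S' S : Finset ι} {x : ∀ i, α i}
    (h : 0 < margProb p S x) : condLim p q S' S x = margProb p S' x / margProb p S x :=
  if_pos h

lemma condLim_nonneg (hp : ∀ w, 0 ≤ p w) (hq : ∀ w, 0 ≤ q w) (S' S : Finset ι)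
    (x : ∀ i, α i) : 0 ≤ condLim p q S' S x := by
  unfold condLim
  split_ifs <;> exact div_nonneg (margProb_nonneg ‹_› _ _) (margProb_nonneg ‹_› _ _)

lemma condLim_pos (hp : ∀ w, 0 ≤ p w) {x : ∀ i, α i} (hx : 0 < p x) (S' S : Finset ι) :
    0 < condLim p q S' S x := by
  have hpos : ∀ S, 0 < margProb p S x := fun S => hx.trans_le (le_margProb hp S x)
  rw [condLim_of_pos q (hpos S)]
  exact div_pos (hpos S') (hpos S)

lemma fstarLim_pos (hp : ∀ w, 0 ≤ p w) (hq : ∀ w, 0 ≤ q w) {w : ∀ i, α i} (hw : 0 < p w)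
    (j : ι) (S' S : Finset ι) : 0 < fstarLim p q j S' S w := by
  have := single_le_sum
    (f := fun v =>
      condLim p q S' S (Function.update w j v) * margProb p {j} (Function.update w j v))
    (fun _ _ => mul_nonneg (condLim_nonneg hp hq _ _ _) (margProb_nonneg hp _ _))
    (mem_univ (w j))
  simp only [Function.update_eq_self] at this
  exact (mul_pos (condLim_pos hp hw S' S) (hw.trans_le (le_margProb hp _ w))).trans_le this

variable {g g' : ∀ i, α i → ℝ} {y X : ι} {L : Finset ι}

lemma condLim_prodDist_insert (hg₀ : ∀ i a, 0 < g i a) (hg : ∀ i, ∑ a, g i a = 1) {j : ι}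
    {S : Finset ι} (hj : j ∉ S) (x : ∀ i, α i) :
    condLim p (prodDist g) (insert j S) S x = if 0 < margProb p S x then
      margProb p (insert j S) x / margProb p S x else g j (x j) := by
  unfold condLim
  split_ifs
  · rfl
  · rw [margProb_prodDist hg, margProb_prodDist hg, prod_insert hj,
      mul_div_cancel_right₀ _ (prod_pos fun i _ => hg₀ i (x i)).ne']

lemma fstarLim_prodDist_eq (hg₀ : ∀ i a, 0 < g i a) (hg : ∀ i, ∑ a, g i a = 1)
    (hyXL : y ∉ insert X L) (w : ∀ i, α i) :
    fstarLim p (prodDist g) X (insert y (insert X L)) (insert X L) w =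
      definedFstarY p y X L w + g y (w y) * undefinedCondMass p X L w := by
  have hXy : y ≠ X := fun h => hyXL (h ▸ mem_insert_self X L)
  unfold fstarLim definedFstarY undefinedCondMass
  rw [mul_sum, ← sum_add_distrib]
  refine sum_congr rfl fun v _ => ?_
  rw [condLim_prodDist_insert hg₀ hg hyXL, Function.update_of_ne hXy]
  split_ifs <;> ring

lemma fstarLim_prodDist_congr (hg₀ : ∀ i a, 0 < g i a) (hg : ∀ i, ∑ a, g i a = 1)
    (hg₀' : ∀ i a, 0 < g' i a) (hg' : ∀ i, ∑ a, g' i a = 1) (hgX : g X = g' X)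
    (hXyL : X ∉ insert y L) (w : ∀ i, α i) :
    fstarLim p (prodDist g) y (insert y (insert X L)) (insert y L) w =
      fstarLim p (prodDist g') y (insert y (insert X L)) (insert y L) w := by
  unfold fstarLim
  simp only [insert_comm y X, condLim_prodDist_insert hg₀ hg hXyL,
    condLim_prodDist_insert hg₀' hg' hXyL, hgX]

lemma pmiLim_prodDist_sub (hp : ∀ w, 0 ≤ p w) (hg₀ : ∀ i a, 0 < g i a)
    (hg : ∀ i, ∑ a, g i a = 1) (hg₀' : ∀ i a, 0 < g' i a) (hg' : ∀ i, ∑ a, g' i a = 1)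
    (hgX : g X = g' X) (hyXL : y ∉ insert X L) (hXyL : X ∉ insert y L) :
    pmiLim p (prodDist g) y X L - pmiLim p (prodDist g') y X L =
      logFstarYFill p y X L (g' y) - logFstarYFill p y X L (g y) := by
  unfold pmiLim logFstarYFill
  rw [← sum_sub_distrib, ← sum_sub_distrib]
  refine sum_congr rfl fun w _ => ?_
  rcases (hp w).lt_or_eq with hw | hw
  · have hq := (isDist_prodDist hg₀ hg).1
    have hq' := (isDist_prodDist hg₀' hg').1
    have hL := hw.trans_le (le_margProb hp L w)
    have hN := div_pos (hw.trans_le (le_margProb hp (insert y (insert X L)) w)) hL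
    have hA := fstarLim_pos hp hq hw y (insert y (insert X L)) (insert y L)
    have hB := fstarLim_pos hp hq hw X (insert y (insert X L)) (insert X L)
    have hB' := fstarLim_pos hp hq' hw X (insert y (insert X L)) (insert X L)
    rw [fstarLim_prodDist_congr hg₀ hg hg₀' hg' hgX hXyL] at hA ⊢
    rw [condLim_of_pos _ hL, condLim_of_pos _ hL, ← fstarLim_prodDist_eq hg₀ hg hyXL,
      ← fstarLim_prodDist_eq hg₀' hg' hyXL,
      Real.log_div hN.ne' (mul_pos hA hB).ne', Real.log_div hN.ne' (mul_pos hA hB').ne',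
      Real.log_mul hA.ne' hB.ne', Real.log_mul hA.ne' hB'.ne']
    ring
  · simp [← hw]

end Limits

section Mixture

variable {Ω : Type*} {p q : Ω → ℝ} {t : ℝ}

def mix (p q : Ω → ℝ) (t : ℝ) : Ω → ℝ := fun w => (1 - t) * p w + t * q w

lemma isDist_mix [Fintype Ω] (hp : IsDist p) (hq : IsDist q) (ht₀ : 0 ≤ t) (ht₁ : t ≤ 1) :
    IsDist (mix p q t) := by
  refine ⟨fun w => add_nonneg (mul_nonneg (by linarith) (hp.1 w)) (mul_nonneg ht₀ (hq.1 w)), ?_⟩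
  simp only [mix, sum_add_distrib, ← mul_sum, hp.2, hq.2]
  ring

lemma mix_pos (hp : ∀ w, 0 ≤ p w) (hq : ∀ w, 0 < q w) (ht₀ : 0 < t) (ht₁ : t ≤ 1) (w : Ω) :
    0 < mix p q t w :=
  add_pos_of_nonneg_of_pos (mul_nonneg (by linarith) (hp w)) (mul_pos ht₀ (hq w))

lemma tvDist_mix [Fintype Ω] (ht₀ : 0 ≤ t) : tvDist (mix p q t) p = t * tvDist q p := by
  simp only [tvDist, mix, mul_div_assoc', mul_sum]
  congr 1
  refine sum_congr rfl fun w _ => ?_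
  rw [← abs_of_nonneg ht₀, ← abs_mul, abs_of_nonneg ht₀]
  ring_nf

lemma tendsto_mix_nhdsGT (a b : ℝ) :
    Tendsto (fun t : ℝ => (1 - t) * a + t * b) (𝓝[>] 0) (𝓝 a) := by
  have : Continuous fun t : ℝ => (1 - t) * a + t * b := by fun_prop
  simpa using (this.tendsto 0).mono_left nhdsWithin_le_nhds

end Mixture

/-- `|a log r| ≤ C k |s log s|`, and `s log s → 0`. -/
lemma tendsto_mul_log_of_le_pow {β : Type*} {l : Filter β} {a r s : β → ℝ} {C : ℝ} {k : ℕ}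
    (hs : Tendsto s l (𝓝 0))
    (h : ∀ᶠ b in l, 0 < s b ∧ |a b| ≤ C * s b ∧ s b ^ k ≤ r b ∧ r b ≤ (s b ^ k)⁻¹) :
    Tendsto (fun b => a b * Real.log (r b)) l (𝓝 0) := by
  have hlim : Tendsto (fun b => C * k * |s b * Real.log (s b)|) l (𝓝 0) := by
    simpa using ((Real.continuous_mul_log.tendsto 0).comp hs).abs.const_mul (C * k)
  refine squeeze_zero_norm' (h.mono fun b ⟨hs₀, ha, hlo, hhi⟩ => ?_) hlim
  have hr : 0 < r b := (pow_pos hs₀ k).trans_le hlo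
  have h₁ : k * Real.log (s b) ≤ Real.log (r b) := by
    rw [← Real.log_pow]; exact Real.log_le_log (pow_pos hs₀ k) hlo
  have h₂ : Real.log (r b) ≤ -(k * Real.log (s b)) := by
    rw [← Real.log_pow, ← Real.log_inv]; exact Real.log_le_log hr hhi
  have hlog : |Real.log (r b)| ≤ k * |Real.log (s b)| := by
    have : -(k * Real.log (s b)) ≤ k * |Real.log (s b)| := by
      rw [← mul_neg]; exact mul_le_mul_of_nonneg_left (neg_le_abs _) k.cast_nonneg
    exact abs_le.2 ⟨by linarith, h₂.trans this⟩
  calc ‖a b * Real.log (r b)‖ = |a b| * |Real.log (r b)| := by rw [Real.norm_eq_abs, abs_mul]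
    _ ≤ C * s b * (k * |Real.log (s b)|) :=
      mul_le_mul ha hlog (abs_nonneg _) ((abs_nonneg _).trans ha)
    _ = C * k * |s b * Real.log (s b)| := by rw [abs_mul, abs_of_pos hs₀]; ring

section MixLimits

variable {p q P : (∀ i, α i) → ℝ} {S S' : Finset ι} {y X : ι} {L : Finset ι}

lemma margProb_mix (p q : (∀ i, α i) → ℝ) (t : ℝ) (S : Finset ι) (x : ∀ i, α i) :
    margProb (mix p q t) S x = (1 - t) * margProb p S x + t * margProb q S x := by
  simp only [margProb, mix, mul_sum, ← sum_add_distrib]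
  exact sum_congr rfl fun w _ => by split_ifs <;> simp

lemma tendsto_margProb_mix (S : Finset ι) (x : ∀ i, α i) :
    Tendsto (fun t => margProb (mix p q t) S x) (𝓝[>] 0) (𝓝 (margProb p S x)) := by
  simpa only [margProb_mix] using tendsto_mix_nhdsGT (margProb p S x) (margProb q S x)

lemma tendsto_ratio_mix (hp : ∀ w, 0 ≤ p w) (hSS' : S ⊆ S') (x : ∀ i, α i) :
    Tendsto (fun t => margProb (mix p q t) S' x / margProb (mix p q t) S x) (𝓝[>] 0)
      (𝓝 (condLim p q S' S x)) := by
  unfold condLim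
  split_ifs with h
  · exact (tendsto_margProb_mix S' x).div (tendsto_margProb_mix S x) h.ne'
  · have hS : margProb p S x = 0 := le_antisymm (not_lt.1 h) (margProb_nonneg hp S x)
    have hS' := margProb_eq_zero_of_subset hp hSS' hS
    refine tendsto_const_nhds.congr' (eventually_nhdsWithin_of_forall fun t ht => ?_)
    dsimp only
    rw [margProb_mix, margProb_mix, hS, hS', mul_zero, zero_add, zero_add,
      mul_div_mul_left _ _ (ne_of_gt ht)]

lemma tendsto_sum_ratio_mix (hp : ∀ w, 0 ≤ p w) (j : ι) (hSS' : S ⊆ S') (w : ∀ i, α i) :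
    Tendsto (fun t => ∑ v : α j, margProb (mix p q t) S' (Function.update w j v) /
        margProb (mix p q t) S (Function.update w j v) *
        margProb (mix p q t) {j} (Function.update w j v)) (𝓝[>] 0)
      (𝓝 (fstarLim p q j S' S w)) :=
  tendsto_finsetSum _ fun _ _ =>
    (tendsto_ratio_mix hp hSS' _).mul (tendsto_margProb_mix _ _)

lemma ratio_mem_Icc {s : ℝ} (hP : IsDist P) (hs : ∀ S x, s ≤ margProb P S x) (hs₀ : 0 < s)
    (hSS' : S ⊆ S') (x : ∀ i, α i) :
    s ≤ margProb P S' x / margProb P S x ∧ margProb P S' x / margProb P S x ≤ 1 := by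
  have hS := hs₀.trans_le (hs S x)
  refine ⟨(le_div_iff₀ hS).2 ?_, (div_le_one hS).2 (margProb_anti hP.1 hSS' x)⟩
  nlinarith [hs S' x, margProb_le_one hP S x]

lemma sum_ratio_mem_Icc {s : ℝ} (hP : IsDist P) (hs : ∀ S x, s ≤ margProb P S x)
    (hs₀ : 0 < s) (j : ι) (hSS' : S ⊆ S') (w : ∀ i, α i) :
    s ^ 2 ≤ ∑ v : α j, margProb P S' (Function.update w j v) /
        margProb P S (Function.update w j v) * margProb P {j} (Function.update w j v) ∧
      ∑ v : α j, margProb P S' (Function.update w j v) /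
        margProb P S (Function.update w j v) * margProb P {j} (Function.update w j v) ≤ 1 := by
  have hterm : ∀ v, 0 ≤ margProb P S' (Function.update w j v) /
      margProb P S (Function.update w j v) * margProb P {j} (Function.update w j v) :=
    fun v => mul_nonneg (hs₀.le.trans (ratio_mem_Icc hP hs hs₀ hSS' _).1)
      (margProb_nonneg hP.1 _ _)
  constructor
  · refine le_trans ?_ (single_le_sum (fun v _ => hterm v) (mem_univ (w j)))
    rw [sq]
    have hr := (ratio_mem_Icc hP hs hs₀ hSS' (Function.update w j (w j))).1
    exact mul_le_mul hr (hs _ _) hs₀.le (hs₀.le.trans hr)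
  · calc _ ≤ ∑ v : α j, margProb P (insert j ∅) (Function.update w j v) :=
          sum_le_sum fun v _ => mul_le_of_le_one_left (margProb_nonneg hP.1 _ _)
            (ratio_mem_Icc hP hs hs₀ hSS' _).2
      _ = 1 := by rw [sum_margProb_update (notMem_empty j), margProb_empty, hP.2]

lemma pmiiLogArg_mem_Icc {s : ℝ} (hP : IsDist P) (hs : ∀ S x, s ≤ margProb P S x)
    (hs₀ : 0 < s) (w : ∀ i, α i) :
    let r := (margProb P (insert y (insert X L)) w / margProb P L w) /
      (pmiFstarX P y X L w * pmiFstarY P y X L w)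
    s ^ 4 ≤ r ∧ r ≤ (s ^ 4)⁻¹ := by
  have hN := ratio_mem_Icc hP hs hs₀ ((subset_insert X L).trans (subset_insert y _)) w
  have hA := sum_ratio_mem_Icc hP hs hs₀ y (insert_subset_insert y (subset_insert X L)) w
  have hB := sum_ratio_mem_Icc hP hs hs₀ X (subset_insert y (insert X L)) w
  change s ^ 2 ≤ pmiFstarX P y X L w ∧ pmiFstarX P y X L w ≤ 1 at hA
  change s ^ 2 ≤ pmiFstarY P y X L w ∧ pmiFstarY P y X L w ≤ 1 at hB
  intro r
  set N := margProb P (insert y (insert X L)) w / margProb P L w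
  set A := pmiFstarX P y X L w
  set B := pmiFstarY P y X L w
  have hA₀ : 0 < A := (pow_pos hs₀ 2).trans_le hA.1
  have hB₀ : 0 < B := (pow_pos hs₀ 2).trans_le hB.1
  have hAB : s ^ 4 ≤ A * B := by
    rw [show 4 = 2 + 2 from rfl, pow_add]
    exact mul_le_mul hA.1 hB.1 (pow_pos hs₀ 2).le hA₀.le
  have hs₁ : s ≤ 1 := (hs ∅ w).trans (margProb_le_one hP ∅ w)
  constructor
  · calc s ^ 4 ≤ s := pow_le_of_le_one hs₀.le hs₁ (by norm_num)
      _ ≤ N := hN.1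
      _ ≤ N / (A * B) := le_div_self (hs₀.le.trans hN.1) (mul_pos hA₀ hB₀)
        (mul_le_one₀ hA.2 hB₀.le hB.2)
  · calc N / (A * B) ≤ 1 / (A * B) := div_le_div_of_nonneg_right hN.2 (mul_pos hA₀ hB₀).le
      _ ≤ 1 / s ^ 4 := one_div_le_one_div_of_le (pow_pos hs₀ 4) hAB
      _ = (s ^ 4)⁻¹ := one_div _

/-- The weight of the summand is `O(t)`, while every marginal of the mixture is at least `t δ`,
where `δ` is the least value of `q`. -/
lemma tendsto_PMII_summand_mix_of_eq_zero (hp : IsDist p) (hq : IsDist q)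
    (hq₀ : ∀ w, 0 < q w) {w : ∀ i, α i} (hw : p w = 0) :
    Tendsto (fun t => mix p q t w * Real.log
      ((margProb (mix p q t) (insert y (insert X L)) w / margProb (mix p q t) L w) /
        (pmiFstarX (mix p q t) y X L w * pmiFstarY (mix p q t) y X L w))) (𝓝[>] 0) (𝓝 0) := by
  have : Nonempty (∀ i, α i) := ⟨w⟩
  obtain ⟨w₁, -, hw₁⟩ := exists_min_image univ q univ_nonempty
  have hq₁ : ∀ x, q x ≤ 1 := fun x => hq.2 ▸ single_le_sum (fun x _ => hq.1 x) (mem_univ x)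
  have hδ := hq₀ w₁
  refine tendsto_mul_log_of_le_pow (s := fun t => t * q w₁) (C := (q w₁)⁻¹) (k := 4)
    (tendsto_nhdsWithin_of_tendsto_nhds (by simpa using (continuous_mul_const (q w₁)).tendsto 0))
    ?_
  filter_upwards [Ioo_mem_nhdsGT one_pos] with t ⟨ht₀, ht₁⟩
  have hP := isDist_mix hp hq ht₀.le ht₁.le
  have hlow : ∀ S x, t * q w₁ ≤ margProb (mix p q t) S x := fun S x => calc
    t * q w₁ ≤ (1 - t) * p x + t * q x := by nlinarith [hp.1 x, hw₁ x (mem_univ x)]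
    _ ≤ margProb (mix p q t) S x := le_margProb hP.1 S x
  refine ⟨mul_pos ht₀ hδ, ?_, pmiiLogArg_mem_Icc hP hlow (mul_pos ht₀ hδ) w⟩
  have : mix p q t w = t * q w := by simp [mix, hw]
  rw [this, abs_of_pos (mul_pos ht₀ (hq₀ w)), mul_left_comm, inv_mul_cancel₀ hδ.ne', mul_one]
  exact mul_le_of_le_one_right ht₀.le (hq₁ w)

lemma tendsto_PMII_mix (hp : IsDist p) (hq : IsDist q) (hq₀ : ∀ w, 0 < q w) (y X : ι)
    (L : Finset ι) :
    Tendsto (fun t => PMII (mix p q t) y X L) (𝓝[>] 0) (𝓝 (pmiLim p q y X L)) := by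
  refine tendsto_finsetSum _ fun w _ => ?_
  rcases (hp.1 w).lt_or_eq with hw | hw
  · have hq' : ∀ w, 0 ≤ q w := fun w => (hq₀ w).le
    have hAB := mul_pos (fstarLim_pos hp.1 hq' hw y (insert y (insert X L)) (insert y L))
      (fstarLim_pos hp.1 hq' hw X (insert y (insert X L)) (insert X L))
    have hsub : L ⊆ insert y (insert X L) := (subset_insert X L).trans (subset_insert y _)
    have hN := (tendsto_ratio_mix (q := q) hp.1 hsub w).div
      ((tendsto_sum_ratio_mix hp.1 y (insert_subset_insert y (subset_insert X L)) w).mul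
        (tendsto_sum_ratio_mix hp.1 X (subset_insert y _) w)) hAB.ne'
    exact (tendsto_mix_nhdsGT (p w) (q w)).mul
      (hN.log (div_pos (condLim_pos hp.1 hw _ _) hAB).ne')
  · rw [← hw, zero_mul]
    exact tendsto_PMII_summand_mix_of_eq_zero hp hq hq₀ hw.symm

lemma pmiiDefined_of_pos {P : (∀ i, α i) → ℝ} (hP : ∀ w, 0 < P w) (y X : ι) (L : Finset ι) :
    PMIIDefined P y X L := fun w _ =>
  ⟨fun _ => (hP w).trans_le (le_margProb (fun w => (hP w).le) _ w),
    fun _ => (hP w).trans_le (le_margProb (fun w => (hP w).le) _ w)⟩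

lemma exists_seq_tendsto_pmiLim (hp : IsDist p) (hq : IsDist q) (hq₀ : ∀ w, 0 < q w)
    (y X : ι) (L : Finset ι) :
    ∃ P : ℕ → (∀ i, α i) → ℝ, (∀ n, IsDist (P n)) ∧
      Tendsto (fun n => tvDist (P n) p) atTop (𝓝 0) ∧ (∀ n, PMIIDefined (P n) y X L) ∧
      Tendsto (fun n => PMII (P n) y X L) atTop (𝓝 (pmiLim p q y X L)) := by
  have ht : Tendsto (fun n : ℕ => ((n : ℝ) + 1)⁻¹) atTop (𝓝[>] 0) :=
    tendsto_nhdsWithin_iff.2 ⟨by simpa using tendsto_one_div_add_atTop_nhds_zero_nat (𝕜 := ℝ),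
      Eventually.of_forall fun n => by simp only [Set.mem_Ioi]; positivity⟩
  have ht₁ : ∀ n : ℕ, ((n : ℝ) + 1)⁻¹ ≤ 1 := fun n => inv_le_one_of_one_le₀ (by simp)
  refine ⟨fun n => mix p q ((n : ℝ) + 1)⁻¹, fun n => isDist_mix hp hq (by positivity) (ht₁ n),
    ?_, fun n => pmiiDefined_of_pos (mix_pos hp.1 hq₀ (by positivity) (ht₁ n)) y X L,
    (tendsto_PMII_mix hp hq hq₀ y X L).comp ht⟩
  simp only [tvDist_mix (inv_nonneg.2 (Nat.cast_add_one_pos _).le)]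
  simpa using (tendsto_nhdsWithin_iff.1 ht).1.mul_const (tvDist q p)

end MixLimits

section UniformUpdate

variable {κ : Type*} [DecidableEq κ] {β : κ → Type*} [∀ k, Fintype (β k)]

def uniformUpdate (y : κ) (μ : β y → ℝ) : ∀ k, β k → ℝ :=
  Function.update (fun k _ => (Fintype.card (β k) : ℝ)⁻¹) y μ

variable {y : κ} {μ : β y → ℝ}

lemma uniformUpdate_pos (hμ : ∀ u, 0 < μ u) (k : κ) (a : β k) : 0 < uniformUpdate y μ k a := by
  unfold uniformUpdate
  rcases eq_or_ne k y with rfl | hk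
  · simpa using hμ a
  · simpa [Function.update_of_ne hk] using Fintype.card_pos_iff.2 ⟨a⟩

lemma sum_uniformUpdate [∀ k, Nonempty (β k)] (hμ : ∑ u, μ u = 1) (k : κ) :
    ∑ a, uniformUpdate y μ k a = 1 := by
  unfold uniformUpdate
  rcases eq_or_ne k y with rfl | hk
  · simpa using hμ
  · simp [Function.update_of_ne hk]

end UniformUpdate

variable [∀ i, Nonempty (α i)]

/-- Proposition 2, part-mutual-information part: if `X` belongs to some
but not every Markov boundary of `Y` within `T`, and `L = T \ {X}`, then there are two
sequences of distributions, both converging to `P` in total variation, along which the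
(everywhere well-defined) part mutual informations converge to two different limits. -/
theorem part_mutual_information_discontinuous_at_multiple_markov_boundaries
    (p : (∀ i, α i) → ℝ) (hp : IsDist p)
    (y X : ι) (T : Finset ι) (hyT : y ∉ T)
    (hin : ∃ M, MarkovBoundary p y T M ∧ X ∈ M)
    (hout : ∃ M, MarkovBoundary p y T M ∧ X ∉ M) :
    ∃ (P P' : ℕ → ((∀ i, α i) → ℝ)) (c c' : ℝ),
      (∀ n, IsDist (P n)) ∧ (∀ n, IsDist (P' n)) ∧
      Filter.Tendsto (fun n => tvDist (P n) p) Filter.atTop (nhds 0) ∧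
      Filter.Tendsto (fun n => tvDist (P' n) p) Filter.atTop (nhds 0) ∧
      (∀ n, PMIIDefined (P n) y X (T.erase X)) ∧
      (∀ n, PMIIDefined (P' n) y X (T.erase X)) ∧
      Filter.Tendsto (fun n => PMII (P n) y X (T.erase X)) Filter.atTop (nhds c) ∧
      Filter.Tendsto (fun n => PMII (P' n) y X (T.erase X)) Filter.atTop (nhds c') ∧
      c ≠ c' := by
  obtain ⟨M, hM, hXM⟩ := hin
  obtain ⟨M', hM', hXM'⟩ := hout
  have hXT : X ∈ T := hM.1.1 hXM
  have hXy : X ≠ y := ne_of_mem_of_not_mem hXT hyT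
  obtain ⟨w₀, hw₀, hD⟩ :=
    exists_undefinedCondMass_pos hp.1 hM hXM hXy (hM'.1.erase hp.1 hXT hXy hXM')
  have := nontrivial_of_markovBoundary hp.1 hM hXM
  obtain ⟨μ, ν, hμ, hν, hne⟩ := exists_logFstarYFill_ne (y := y) hp.1 hw₀ hD
  have hseq := fun (μ : α y → ℝ) (hμ : (∀ u, 0 < μ u) ∧ ∑ u, μ u = 1) =>
    exists_seq_tendsto_pmiLim hp
      (isDist_prodDist (uniformUpdate_pos hμ.1) (sum_uniformUpdate hμ.2))
      (prodDist_pos (uniformUpdate_pos hμ.1)) y X (T.erase X)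
  obtain ⟨P, hP, hPp, hPdef, hPlim⟩ := hseq μ hμ
  obtain ⟨P', hP', hP'p, hP'def, hP'lim⟩ := hseq ν hν
  refine ⟨P, P', _, _, hP, hP', hPp, hP'p, hPdef, hP'def, hPlim, hP'lim, fun h => hne ?_⟩
  have hsub := pmiLim_prodDist_sub (y := y) (X := X) (L := T.erase X) hp.1
    (uniformUpdate_pos hμ.1) (sum_uniformUpdate hμ.2) (uniformUpdate_pos hν.1)
    (sum_uniformUpdate hν.2) (by simp [uniformUpdate, Function.update_of_ne hXy])
    (by simp [hXy.symm, hyT]) (by simp [hXy])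
  rw [h, sub_self, uniformUpdate, Function.update_self, uniformUpdate, Function.update_self]
    at hsub
  linarith
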